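/- For every t∈ℤ₊, d̄_t ≥ P(σ^min > t), where σ^min is a random variable with distribution function F^min = max_{v∈V} F_v, and F_v is the distribution function of σ̃_v = inf{t≥0 : ∪_{s≤t} A_{X_s} = V} for a random walk X on G started at v. -/

import Mathlib

open MeasureTheory ProbabilityTheory Filter
open scoped ENNReal Classical

noncomputable section

/-- The closed neighborhood `A_v = {u : {u,v} ∈ E} ∪ {v}` of a vertex `v` of `G`. -/
def nbhd {V : Type*} [Fintype V] [DecidableEq V] (G : SimpleGraph V) [DecidableRel G.Adj]
    (v : V) : Finset V := insert v (G.neighborFinset v)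

/-- The `Exp(1)` distribution on `ℝ`. -/
def expM : Measure ℝ :=
  MeasureTheory.volume.withDensity fun t => ENNReal.ofReal (if 0 ≤ t then Real.exp (-t) else 0)

/-- A minimizer of `Γ` on the nonempty finite set `s`. -/
def argminOn {V : Type*} (Γ : V → ℝ) (s : Finset V) (hs : s.Nonempty) : V :=
  (Finset.exists_min_image s Γ hs).choose

/-- One step transition kernel of the local Bak-Sneppen model on `G`: from state `(v, Γ)`,
move to the vertex `x = argmin_{u ∈ A_v} Γ(u)`, and resample the fitnesses on `A_x` as
i.i.d. `Exp(1)` (independent of everything), keeping all other fitnesses unchanged. -/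
def step {V : Type*} [Fintype V] [DecidableEq V] [MeasurableSpace V]
    (G : SimpleGraph V) [DecidableRel G.Adj] (s : V × (V → ℝ)) : Measure (V × (V → ℝ)) :=
  (Measure.pi fun _ : V => expM).map
    (fun U =>
      (argminOn s.2 (nbhd G s.1) ⟨s.1, Finset.mem_insert_self _ _⟩,
       fun w => if w ∈ nbhd G (argminOn s.2 (nbhd G s.1) ⟨s.1, Finset.mem_insert_self _ _⟩)
         then U w else s.2 w))

/-- The law of `Ξ_t` for the local Bak-Sneppen chain on `G` started at state `η`. -/
def lawAt {V : Type*} [Fintype V] [DecidableEq V] [MeasurableSpace V]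
    (G : SimpleGraph V) [DecidableRel G.Adj] (η : V × (V → ℝ)) : ℕ → Measure (V × (V → ℝ))
  | 0 => Measure.dirac η
  | n + 1 => (lawAt G η n).bind (step G)

/-- The state space `Ω`: states whose fitness function is nonnegative and one-to-one. -/
def goodStates {V : Type*} : Set (V × (V → ℝ)) :=
  {s | Function.Injective s.2 ∧ ∀ v, 0 ≤ s.2 v}

/-- Total variation distance `sup_A |μ(A) - ν(A)|` between two measures. -/
def tvDist {α : Type*} [MeasurableSpace α] (μ ν : Measure α) : ℝ :=
  ⨆ A : {A : Set α // MeasurableSet A}, |(μ A.1).toReal - (ν A.1).toReal|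

/-- `d̄_t = sup_{η,η' ∈ Ω} ‖P_η(Ξ_t ∈ ·) - P_{η'}(Ξ_t ∈ ·)‖_TV`. -/
def dbar {V : Type*} [Fintype V] [DecidableEq V] [MeasurableSpace V]
    (G : SimpleGraph V) [DecidableRel G.Adj] (t : ℕ) : ℝ :=
  ⨆ η : (goodStates (V := V)), ⨆ η' : (goodStates (V := V)),
    tvDist (lawAt G η.1 t) (lawAt G η'.1 t)

/-- Finite-dimensional laws `(Ξ_0, …, Ξ_n)` of the chain started at `η`. -/
def fdd {V : Type*} [Fintype V] [DecidableEq V] [MeasurableSpace V]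
    (G : SimpleGraph V) [DecidableRel G.Adj] (η : V × (V → ℝ)) :
    (n : ℕ) → Measure (Fin (n + 1) → V × (V → ℝ))
  | 0 => Measure.dirac (fun _ => η)
  | n + 1 => (fdd G η n).bind fun path => (step G (path (Fin.last n))).map (Fin.snoc path)

/-- `P` is the law `P_η` on path space of the local Bak-Sneppen chain on `G` started
at `η`: it is the probability measure whose finite-dimensional distributions are the
ones produced by iterating the one-step transition kernel from `η`. -/
def IsChainLaw {V : Type*} [Fintype V] [DecidableEq V] [MeasurableSpace V]
    (G : SimpleGraph V) [DecidableRel G.Adj] (η : V × (V → ℝ))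
    (P : Measure (ℕ → V × (V → ℝ))) : Prop :=
  IsProbabilityMeasure P ∧
    ∀ n : ℕ, P.map (fun ω (i : Fin (n + 1)) => ω i) = fdd G η n

/-- `Exp⁺(n)`: the law of `Y₁` conditioned on the event that `Y₁` is not the minimum of
`Y₁, …, Y_n`, where `Y₁, …, Y_n` are i.i.d. `Exp(1)`. -/
def expPlus : ℕ → Measure ℝ
  | 0 => 0
  | m + 1 =>
    (ProbabilityTheory.cond (Measure.pi fun _ : Fin (m + 1) => expM)
      {y | ∃ i, y i < y 0}).map (fun y => y 0)

/-- Transition probabilities `p(u,w) = 1_{A_u}(w)/|A_u|` of the random walk on `G`. -/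
def trP {V : Type*} [Fintype V] [DecidableEq V] (G : SimpleGraph V) [DecidableRel G.Adj]
    (u w : V) : ℝ :=
  (if w ∈ nbhd G u then 1 else 0) / ((nbhd G u).card : ℝ)

/-- The probability weight of a path of the random walk on `G`. -/
def walkWt {V : Type*} [Fintype V] [DecidableEq V] (G : SimpleGraph V) [DecidableRel G.Adj]
    {t : ℕ} (x : Fin (t + 1) → V) : ℝ :=
  ∏ i : Fin t, trP G (x i.castSucc) (x i.succ)

/-- `F_v(t) = P(σ̃_v ≤ t)` where `σ̃_v = inf{t ≥ 0 : ∪_{s ≤ t} A_{X_s} = V}` for the random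
walk `X` on `G` started at `v`. -/
def coverF {V : Type*} [Fintype V] [DecidableEq V] (G : SimpleGraph V) [DecidableRel G.Adj]
    (v : V) (t : ℕ) : ℝ :=
  ∑ x ∈ Finset.univ.filter (fun x : Fin (t + 1) → V =>
      x 0 = v ∧ ∀ u : V, ∃ i, u ∈ nbhd G (x i)), walkWt G x

/-- `Ψ(b)`: the proportion of vertices whose fitness is at least `b`. -/
def propAbove {V : Type*} [Fintype V] (b : ℝ) (Γ : V → ℝ) : ℝ :=
  ((Finset.univ.filter fun v => b ≤ Γ v).card : ℝ) / (Fintype.card V : ℝ)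

/-- The set `A_{α,b}` of states in which a proportion at least `α` of the vertices has
fitness `≥ b`. -/
def Aab {V : Type*} [Fintype V] (α b : ℝ) : Set (V × (V → ℝ)) :=
  {s | α ≤ propAbove b s.2}

/-- `p_{d,b} = P(Exp⁺(d+1) ≥ b) = ((d+1)/d)(e^{-b} - e^{-(d+1)b}/(d+1))`. -/
def pd (d : ℕ) (b : ℝ) : ℝ :=
  (((d : ℝ) + 1) / d) * (Real.exp (-b) - Real.exp (-((d : ℝ) + 1) * b) / ((d : ℝ) + 1))

/-- `P(Binomial(k,p) ≥ m)`. -/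
def binomTail (k m : ℕ) (p : ℝ) : ℝ :=
  ∑ j ∈ Finset.Icc m k, (k.choose j : ℝ) * p ^ j * (1 - p) ^ (k - j)

/-- Finite-dimensional laws of the random walk on `G` with initial distribution `μ0`. -/
def walkFdd {V : Type*} [Fintype V] [DecidableEq V] [MeasurableSpace V]
    (G : SimpleGraph V) [DecidableRel G.Adj] (μ0 : V → ℝ) (n : ℕ) :
    Measure (Fin (n + 1) → V) :=
  ∑ x : Fin (n + 1) → V, ENNReal.ofReal (μ0 (x 0) * walkWt G x) • Measure.dirac x

/-!
Fix `v` maximising `F_v(t)` and a fitness profile `Γ` with `Γ v = 0` strictly minimal, and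
compare the chains started at `(v, Γ + 1)` and `(v, Γ)` on the event that every fitness differs
from `Γ`. Fresh `Exp(1)` values almost surely avoid the finitely many values of `Γ`, so from
`(v, Γ + 1)` the event has probability one. From `(v, Γ)` the chain first stays at `v`; afterwards
it always sits at a vertex `u` whose closed neighbourhood `A_u` has just been resampled, so its next
move is the argmin of i.i.d. continuous values on `A_u`, which by exchangeability hits each vertex
with probability at most `1 / |A_u|`: the positions are dominated by the random walk. A fitness
differs from `Γ` only if its vertex was resampled, i.e. lies in some `A_{X_s}`, so the event has
probability at most `F_v(t - 1) ≤ F_v(t)`.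
-/

section Argmin

variable {V : Type*}

lemma argminOn_mem (Γ : V → ℝ) (s : Finset V) (hs : s.Nonempty) : argminOn Γ s hs ∈ s :=
  (s.exists_min_image Γ hs).choose_spec.1

lemma argminOn_le (Γ : V → ℝ) {s : Finset V} (hs : s.Nonempty) {c : V} (hc : c ∈ s) :
    Γ (argminOn Γ s hs) ≤ Γ c :=
  (s.exists_min_image Γ hs).choose_spec.2 c hc

lemma argminOn_eq_of_lt {Γ : V → ℝ} {s : Finset V} (hs : s.Nonempty) {b : V} (hb : b ∈ s)
    (h : ∀ c ∈ s, c ≠ b → Γ b < Γ c) : argminOn Γ s hs = b := by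
  by_contra hne
  exact (h _ (argminOn_mem Γ s hs) hne).not_ge (argminOn_le Γ hs hb)

lemma argminOn_congr_of_isMin_iff {Γ Γ' : V → ℝ} {s : Finset V} (hs : s.Nonempty)
    (h : ∀ b, (b ∈ s ∧ ∀ c ∈ s, Γ b ≤ Γ c) ↔ (b ∈ s ∧ ∀ c ∈ s, Γ' b ≤ Γ' c)) :
    argminOn Γ s hs = argminOn Γ' s hs := by
  unfold argminOn
  congr 1
  ext b
  exact h b

lemma argminOn_congr {Γ Γ' : V → ℝ} {s : Finset V} (hs : s.Nonempty)
    (h : ∀ b ∈ s, Γ b = Γ' b) : argminOn Γ s hs = argminOn Γ' s hs :=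
  argminOn_congr_of_isMin_iff hs fun b =>
    and_congr_right fun hb => forall₂_congr fun c hc => by rw [h b hb, h c hc]

/-- `argminOn Γ` depends on `Γ` only through its set of minimizers, which takes finitely many
values. -/
lemma measurable_argminOn [Finite V] [MeasurableSpace V] (s : Finset V) (hs : s.Nonempty) :
    Measurable fun Γ : V → ℝ => argminOn Γ s hs := by
  set isMin : (V → ℝ) → V → Prop := fun Γ b => b ∈ s ∧ ∀ c ∈ s, Γ b ≤ Γ c
  have hfactor : (fun Γ => argminOn Γ s hs) =
      (fun p => argminOn (Function.invFun isMin p) s hs) ∘ isMin :=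
    funext fun Γ => argminOn_congr_of_isMin_iff hs fun b =>
      Iff.of_eq (congrFun (Function.invFun_eq (f := isMin) ⟨Γ, rfl⟩) b).symm
  rw [hfactor]
  exact Measurable.of_discrete.comp (measurable_pi_iff.2 fun b => by fun_prop)

end Argmin

section IidCoordinates

variable {V : Type*} [Fintype V] {μ : Measure ℝ} [IsProbabilityMeasure μ]

lemma pi_coord_eq_coord_null [NullSingletonClass μ] {w w' : V} (h : w ≠ w') :
    Measure.pi (fun _ : V => μ) {U | U w = U w'} = 0 := by
  have hind : IndepFun (fun U : V → ℝ => U w) (fun U => U w') (Measure.pi fun _ : V => μ) :=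
    (iIndepFun_pi (X := fun _ => id) fun _ => aemeasurable_id).indepFun h
  have hlaw := (indepFun_iff_map_prod_eq_prod_map_map
    (measurable_pi_apply w).aemeasurable (measurable_pi_apply w').aemeasurable).1 hind
  rw [(measurePreserving_eval _ w).map_eq, (measurePreserving_eval _ w').map_eq] at hlaw
  have hdiag : MeasurableSet {p : ℝ × ℝ | p.1 = p.2} := measurableSet_diagonal
  calc Measure.pi (fun _ : V => μ) {U | U w = U w'}
      = (Measure.pi fun _ : V => μ).map (fun U => (U w, U w')) {p | p.1 = p.2} := by
        rw [Measure.map_apply ((measurable_pi_apply w).prodMk (measurable_pi_apply w')) hdiag]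
        rfl
    _ = 0 := by
        rw [hlaw, Measure.measure_prod_null hdiag]
        exact Filter.Eventually.of_forall fun x => by simp [Set.preimage]

lemma measurePreserving_comp_swap [DecidableEq V] (a b : V) :
    MeasurePreserving (fun U : V → ℝ => U ∘ Equiv.swap a b)
      (Measure.pi fun _ : V => μ) (Measure.pi fun _ : V => μ) :=
  measurePreserving_arrowCongr' _ _ (Equiv.swap a b) (MeasurableEquiv.refl ℝ) fun _ =>
    MeasurePreserving.id μ

/-- By exchangeability all `#s` events "`U w` is minimal on `s`" have the same probability,
and they overlap only on ties, which are null. -/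
lemma pi_argminOn_eq_le [DecidableEq V] [NullSingletonClass μ] {s : Finset V}
    (hs : s.Nonempty) {u : V} (hu : u ∈ s) :
    Measure.pi (fun _ : V => μ) {U | argminOn U s hs = u} ≤ (s.card : ℝ≥0∞)⁻¹ := by
  set P := Measure.pi fun _ : V => μ
  set isMinAt : V → Set (V → ℝ) := fun w => {U | ∀ c ∈ s, U w ≤ U c}
  have hmeas : ∀ w, MeasurableSet (isMinAt w) := fun w =>
    measurableSet_setOfPred.2 (by fun_prop)
  have hsymm : ∀ w ∈ s, P (isMinAt w) = P (isMinAt u) := by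
    intro w hw
    have hswap : ∀ c ∈ s, Equiv.swap u w c ∈ s := fun c hc => by
      rw [Equiv.swap_apply_def]; split_ifs <;> assumption
    have hpre : (fun U : V → ℝ => U ∘ Equiv.swap u w) ⁻¹' isMinAt w = isMinAt u := by
      ext U
      simp only [isMinAt, Set.mem_preimage, Set.mem_ofPred_eq, Function.comp_apply,
        Equiv.swap_apply_right]
      exact ⟨fun h c hc => by simpa using h _ (hswap c hc), fun h c hc => h _ (hswap c hc)⟩
    rw [← hpre]
    exact ((measurePreserving_comp_swap (μ := μ) u w).measure_preimage
      (hmeas w).nullMeasurableSet).symm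
  have haedisj : (s : Set V).Pairwise (Function.onFun (AEDisjoint P) isMinAt) := by
    intro w hw w' hw' hne
    refine measure_mono_null (fun U ⟨h, h'⟩ => ?_) (pi_coord_eq_coord_null (μ := μ) hne)
    exact le_antisymm (h w' hw') (h' w hw)
  have hsum : ∑ w ∈ s, P (isMinAt w) ≤ 1 := by
    rw [← measure_biUnion_finset₀ haedisj fun w _ => (hmeas w).nullMeasurableSet]
    exact prob_le_one
  rw [Finset.sum_congr rfl hsymm, Finset.sum_const, nsmul_eq_mul] at hsum
  calc P {U | argminOn U s hs = u} ≤ P (isMinAt u) :=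
        measure_mono fun U hU c hc => hU ▸ argminOn_le U hs hc
    _ ≤ (s.card : ℝ≥0∞)⁻¹ := ENNReal.le_inv_iff_mul_le.2 (by rwa [mul_comm])

end IidCoordinates

instance : IsProbabilityMeasure expM where
  measure_univ := by
    rw [expM, withDensity_apply _ MeasurableSet.univ, Measure.restrict_univ,
      ← lintegral_exponentialPDF_eq_one one_pos]
    simp [exponentialPDF_eq]

instance : NullSingletonClass expM := by
  unfold expM; infer_instance

section Step

variable {V : Type*} [Fintype V] [DecidableEq V] (G : SimpleGraph V) [DecidableRel G.Adj]

lemma mem_nbhd_self (v : V) : v ∈ nbhd G v := Finset.mem_insert_self _ _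

lemma card_nbhd_pos (u : V) : 0 < (nbhd G u).card :=
  Finset.card_pos.2 ⟨u, mem_nbhd_self G u⟩

def nextVertex (s : V × (V → ℝ)) : V :=
  argminOn s.2 (nbhd G s.1) ⟨s.1, mem_nbhd_self G s.1⟩

lemma nextVertex_congr {u : V} {g g' : V → ℝ} (h : ∀ w ∈ nbhd G u, g w = g' w) :
    nextVertex G (u, g) = nextVertex G (u, g') :=
  argminOn_congr _ h

def stepMap (s : V × (V → ℝ)) (U : V → ℝ) : V × (V → ℝ) :=
  (nextVertex G s, fun w => if w ∈ nbhd G (nextVertex G s) then U w else s.2 w)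

lemma stepMap_snd_of_mem {s : V × (V → ℝ)} {U : V → ℝ} {w : V}
    (hw : w ∈ nbhd G (nextVertex G s)) : (stepMap G s U).2 w = U w :=
  if_pos hw

lemma stepMap_snd_of_notMem {s : V × (V → ℝ)} {U : V → ℝ} {w : V}
    (hw : w ∉ nbhd G (nextVertex G s)) : (stepMap G s U).2 w = s.2 w :=
  if_neg hw

variable [MeasurableSpace V]

lemma step_eq_map (s : V × (V → ℝ)) :
    step G s = (Measure.pi fun _ : V => expM).map (stepMap G s) := rfl

variable [MeasurableSingletonClass V]

lemma measurable_nextVertex : Measurable (nextVertex G) :=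
  measurable_from_prod_countable_right (f := nextVertex G) fun x =>
    measurable_argminOn (nbhd G x) ⟨x, mem_nbhd_self G x⟩

lemma measurable_stepMap_uncurry :
    Measurable fun p : (V × (V → ℝ)) × (V → ℝ) => stepMap G p.1 p.2 := by
  have hnext : Measurable fun p : (V × (V → ℝ)) × (V → ℝ) => nextVertex G p.1 :=
    (measurable_nextVertex G).comp measurable_fst
  refine hnext.prodMk (measurable_pi_lambda _ fun w => Measurable.ite ?_
    ((measurable_pi_apply w).comp measurable_snd)
    ((measurable_pi_apply w).comp (measurable_snd.comp measurable_fst)))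
  exact hnext (Set.toFinite {x | w ∈ nbhd G x}).measurableSet

lemma measurable_stepMap (s : V × (V → ℝ)) : Measurable (stepMap G s) :=
  (measurable_stepMap_uncurry G).comp (f := Prod.mk s) measurable_prodMk_left

lemma step_apply (s : V × (V → ℝ)) {S : Set (V × (V → ℝ))} (hS : MeasurableSet S) :
    step G s S = Measure.pi (fun _ : V => expM) (stepMap G s ⁻¹' S) := by
  rw [step_eq_map, Measure.map_apply (measurable_stepMap G s) hS]

instance (s : V × (V → ℝ)) : IsProbabilityMeasure (step G s) := by
  rw [step_eq_map]
  exact Measure.isProbabilityMeasure_map (measurable_stepMap G s).aemeasurable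

lemma measurable_step : Measurable (step G) :=
  Measure.measurable_of_measurable_coe _ fun S hS => by
    simp_rw [step_apply G _ hS]
    exact measurable_measure_prodMk_left (measurable_stepMap_uncurry G hS)

instance (η : V × (V → ℝ)) (t : ℕ) : IsProbabilityMeasure (lawAt G η t) := by
  induction t with
  | zero => rw [lawAt]; infer_instance
  | succ n ih =>
    rw [lawAt]
    exact isProbabilityMeasure_bind (measurable_step G).aemeasurable (ae_of_all _ inferInstance)

end Step

lemma sum_pi_fin_eq_sum_snoc {α M : Type*} [Fintype α] [AddCommMonoid M] {m : ℕ}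
    (F : (Fin (m + 2) → α) → M) :
    ∑ x, F x = ∑ z : α, ∑ x : Fin (m + 1) → α, F (Fin.snoc x z) := by
  rw [← Fintype.sum_prod_type']
  exact (Fintype.sum_equiv (Fin.snocEquiv fun _ => α) _ _ fun _ => rfl).symm

section RandomWalk

variable {V : Type*} [Fintype V] [DecidableEq V] (G : SimpleGraph V) [DecidableRel G.Adj]

lemma trP_nonneg (u w : V) : 0 ≤ trP G u w := by
  unfold trP; positivity

lemma sum_trP (u : V) : ∑ w, trP G u w = 1 := by
  have hcard : ((nbhd G u).card : ℝ) ≠ 0 := by exact_mod_cast (card_nbhd_pos G u).ne'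
  simp only [trP, ← Finset.sum_div, Finset.sum_boole, Finset.filter_univ_mem, div_self hcard]

lemma walkWt_nonneg {t : ℕ} (x : Fin (t + 1) → V) : 0 ≤ walkWt G x :=
  Finset.prod_nonneg fun _ _ => trP_nonneg G _ _

lemma walkWt_snoc {t : ℕ} (x : Fin (t + 1) → V) (z : V) :
    walkWt G (Fin.snoc x z : Fin (t + 2) → V) = walkWt G x * trP G (x (Fin.last t)) z := by
  simp only [walkWt, Fin.prod_univ_castSucc, Fin.succ_castSucc, Fin.snoc_castSucc, Fin.succ_last,
    Fin.snoc_last]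

def coveredBy {t : ℕ} (x : Fin (t + 1) → V) : Finset V :=
  Finset.univ.biUnion fun i => nbhd G (x i)

lemma coveredBy_snoc {t : ℕ} (x : Fin (t + 1) → V) (z : V) :
    coveredBy G (Fin.snoc x z : Fin (t + 2) → V) = nbhd G z ∪ coveredBy G x := by
  ext w
  simp [coveredBy, Fin.exists_fin_succ', or_comm]

/-- The probability that the random walk on `G` from `v` is at `u` after `m` steps and the
closed neighbourhoods of the visited vertices cover `W`. -/
def coverProb (v : V) (m : ℕ) (u : V) (W : Finset V) : ℝ :=
  ∑ x : Fin (m + 1) → V,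
    if x 0 = v ∧ x (Fin.last m) = u ∧ W ⊆ coveredBy G x then walkWt G x else 0

lemma coverProb_nonneg (v : V) (m : ℕ) (u : V) (W : Finset V) : 0 ≤ coverProb G v m u W :=
  Finset.sum_nonneg fun x _ => ite_nonneg (walkWt_nonneg G x) le_rfl

lemma coverProb_zero_self {v : V} {W : Finset V} (hW : W ⊆ nbhd G v) :
    coverProb G v 0 v W = 1 := by
  rw [coverProb, Fintype.sum_eq_single (fun _ => v)]
  · simp [walkWt, coveredBy, hW]
  · intro x hx
    rw [if_neg]
    rintro ⟨h0, -⟩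
    exact hx (funext fun i => by rwa [Fin.fin_one_eq_zero i])

lemma coverProb_anti {v : V} {m : ℕ} {u : V} {W W' : Finset V} (h : W ⊆ W') :
    coverProb G v m u W' ≤ coverProb G v m u W :=
  Finset.sum_le_sum fun x _ => by
    split_ifs with hW' hW
    · exact le_rfl
    · exact absurd ⟨hW'.1, hW'.2.1, h.trans hW'.2.2⟩ hW
    · exact walkWt_nonneg G x
    · exact le_rfl

lemma coverProb_succ (v : V) (m : ℕ) (u' : V) (W : Finset V) :
    coverProb G v (m + 1) u' W = ∑ u, coverProb G v m u (W \ nbhd G u') * trP G u u' := by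
  simp only [coverProb, Finset.sum_mul, ite_mul, zero_mul]
  rw [sum_pi_fin_eq_sum_snoc, Finset.sum_comm, Finset.sum_comm (γ := V)]
  refine Finset.sum_congr rfl fun x _ => ?_
  simp [coveredBy_snoc, walkWt_snoc, sdiff_le_iff, ite_and]

lemma sum_coverProb_univ (v : V) (m : ℕ) :
    ∑ u, coverProb G v m u Finset.univ = coverF G v m := by
  rw [coverF, Finset.sum_filter]
  simp only [coverProb]
  rw [Finset.sum_comm]
  refine Finset.sum_congr rfl fun x _ => ?_
  simp [ite_and, coveredBy, Finset.eq_univ_iff_forall]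

lemma coverF_nonneg (v : V) (t : ℕ) : 0 ≤ coverF G v t :=
  Finset.sum_nonneg fun x _ => walkWt_nonneg G x

lemma coverF_le_succ (v : V) (m : ℕ) : coverF G v m ≤ coverF G v (m + 1) := by
  rw [← sum_coverProb_univ, ← sum_coverProb_univ]
  calc ∑ u, coverProb G v m u Finset.univ
      = ∑ u', ∑ u, coverProb G v m u Finset.univ * trP G u u' := by
        rw [Finset.sum_comm]; simp [← Finset.mul_sum, sum_trP]
    _ ≤ ∑ u', ∑ u, coverProb G v m u (Finset.univ \ nbhd G u') * trP G u u' := by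
        gcongr with u' _ u _
        · exact trP_nonneg G u u'
        · exact coverProb_anti G Finset.sdiff_subset
    _ = ∑ u', coverProb G v (m + 1) u' Finset.univ := by simp only [coverProb_succ]

lemma pi_nextVertex_eq_le (u u' : V) :
    Measure.pi (fun _ : V => expM) {g | nextVertex G (u, g) = u'} ≤
      ENNReal.ofReal (trP G u u') := by
  by_cases h : u' ∈ nbhd G u
  · calc Measure.pi (fun _ : V => expM) {g | nextVertex G (u, g) = u'}
        ≤ ((nbhd G u).card : ℝ≥0∞)⁻¹ := pi_argminOn_eq_le ⟨u, mem_nbhd_self G u⟩ h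
      _ = ENNReal.ofReal (trP G u u') := by
        rw [trP, if_pos h, one_div, ENNReal.ofReal_inv_of_pos (by exact_mod_cast card_nbhd_pos G u),
          ENNReal.ofReal_natCast]
  · have hempty : {g | nextVertex G (u, g) = u'} = ∅ :=
      Set.eq_empty_of_forall_notMem fun g hg => h (hg ▸ argminOn_mem _ _ _)
    simp [hempty]

end RandomWalk

lemma ae_bind_of_ae_ae {α β : Type*} [MeasurableSpace α] [MeasurableSpace β] {m : Measure α}
    {f : α → Measure β} (hf : Measurable f) {p : β → Prop} (hp : MeasurableSet {b | p b})
    (h : ∀ᵐ a ∂m, ∀ᵐ b ∂f a, p b) : ∀ᵐ b ∂m.bind f, p b := by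
  rw [ae_iff, ← Set.compl_ofPred, Measure.bind_apply hp.compl hf.aemeasurable,
    lintegral_eq_zero_iff (f := fun a => f a {b | p b}ᶜ)
      ((Measure.measurable_coe hp.compl).comp hf)]
  exact h.mono fun a ha => ae_iff.1 ha

section FreshValues

variable {V : Type*} [Fintype V] [DecidableEq V] [MeasurableSpace V] [MeasurableSingletonClass V]
  (G : SimpleGraph V) [DecidableRel G.Adj]

lemma lawAt_ae_ne (η : V × (V → ℝ)) (c : V → ℝ) (h : ∀ w, η.2 w ≠ c w) (t : ℕ) :
    ∀ᵐ s ∂lawAt G η t, ∀ w, s.2 w ≠ c w := by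
  have hmeas : MeasurableSet {s : V × (V → ℝ) | ∀ w, s.2 w ≠ c w} :=
    measurableSet_setOfPred.2 (by fun_prop)
  induction t with
  | zero => exact (ae_dirac_iff hmeas).2 h
  | succ n ih =>
    refine ae_bind_of_ae_ae (measurable_step G) hmeas (ih.mono fun s hs => ?_)
    rw [step_eq_map, ae_map_iff (measurable_stepMap G s).aemeasurable hmeas]
    refine ae_all_iff.2 fun w => (Measure.ae_eval_ne _ w (c w)).mono fun U hU => ?_
    simp only [stepMap]
    split_ifs
    · exact hU
    · exact hs w

lemma lawAt_forall_ne_eq_one (η : V × (V → ℝ)) {c : V → ℝ} (h : ∀ w, η.2 w ≠ c w) (t : ℕ) :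
    lawAt G η t {s | ∀ w, s.2 w ≠ c w} = 1 :=
  (ae_iff_prob_eq_one (by fun_prop)).1 (lawAt_ae_ne G η c h t)

end FreshValues

section Coupling

variable {V : Type*} [Fintype V] [DecidableEq V] (G : SimpleGraph V) [DecidableRel G.Adj]

def coverEvent (c : V → ℝ) (u : V) (W : Finset V) (E : Set (V → ℝ)) : Set (V × (V → ℝ)) :=
  {s | s.1 = u ∧ (∀ w ∈ W \ nbhd G u, s.2 w ≠ c w) ∧ s.2 ∈ E}

def preCoverEvent (c : V → ℝ) (u' : V) (W : Finset V) : Set (V × (V → ℝ)) :=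
  {s | nextVertex G s = u' ∧ ∀ w ∈ W \ nbhd G u', s.2 w ≠ c w}

lemma preCoverEvent_subset (c : V → ℝ) (u' : V) (W : Finset V) :
    preCoverEvent G c u' W ⊆
      ⋃ u, coverEvent G c u (W \ nbhd G u') {g | nextVertex G (u, g) = u'} :=
  fun s ⟨hnext, hW⟩ => Set.mem_iUnion.2 ⟨s.1, rfl, fun w hw => hW w (Finset.sdiff_subset hw), hnext⟩

variable [MeasurableSpace V] [MeasurableSingletonClass V]

lemma measurableSet_coverEvent (c : V → ℝ) (u : V) (W : Finset V) {E : Set (V → ℝ)}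
    (hE : MeasurableSet E) : MeasurableSet (coverEvent G c u W E) :=
  measurableSet_setOfPred.2 (by have := hE.mem; fun_prop)

lemma measurableSet_preCoverEvent (c : V → ℝ) (u' : V) (W : Finset V) :
    MeasurableSet (preCoverEvent G c u' W) :=
  measurableSet_setOfPred.2 (by have := measurable_nextVertex G; fun_prop)

lemma step_coverEvent (c : V → ℝ) {u' : V} (W : Finset V) {E : Set (V → ℝ)}
    (hE : MeasurableSet E) (hdep : DependsOn (· ∈ E) (nbhd G u' : Set V)) (s : V × (V → ℝ)) :
    step G s (coverEvent G c u' W E) =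
      (preCoverEvent G c u' W).indicator (fun _ => Measure.pi (fun _ : V => expM) E) s := by
  rw [step_apply G s (measurableSet_coverEvent G c u' W hE)]
  by_cases hs : s ∈ preCoverEvent G c u' W
  · rw [Set.indicator_of_mem hs]
    congr 1
    ext U
    have hfresh : (stepMap G s U).2 ∈ E ↔ U ∈ E :=
      Iff.of_eq <| hdep fun w hw => stepMap_snd_of_mem G (hs.1 ▸ hw)
    simp only [coverEvent, Set.mem_preimage, Set.mem_ofPred_eq, hfresh]
    refine ⟨fun h => h.2.2, fun hU => ⟨hs.1, fun w hw => ?_, hU⟩⟩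
    rw [stepMap_snd_of_notMem G (hs.1 ▸ (Finset.mem_sdiff.1 hw).2)]
    exact hs.2 w hw
  · rw [Set.indicator_of_notMem hs, ← measure_empty (μ := Measure.pi fun _ : V => expM)]
    congr 1
    ext U
    simp only [coverEvent, Set.mem_preimage, Set.mem_ofPred_eq, Set.mem_empty_iff_false, iff_false]
    rintro ⟨hnext : nextVertex G s = u', hne, -⟩
    refine hs ⟨hnext, fun w hw => ?_⟩
    rw [← stepMap_snd_of_notMem G (U := U) (hnext ▸ (Finset.mem_sdiff.1 hw).2)]
    exact hne w hw

lemma lawAt_succ_coverEvent (η : V × (V → ℝ)) (n : ℕ) (c : V → ℝ) {u' : V} (W : Finset V)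
    {E : Set (V → ℝ)} (hE : MeasurableSet E) (hdep : DependsOn (· ∈ E) (nbhd G u' : Set V)) :
    lawAt G η (n + 1) (coverEvent G c u' W E) =
      Measure.pi (fun _ : V => expM) E * lawAt G η n (preCoverEvent G c u' W) := by
  rw [lawAt, Measure.bind_apply (measurableSet_coverEvent G _ _ _ hE)
    (measurable_step G).aemeasurable]
  simp_rw [step_coverEvent G _ W hE hdep]
  exact lintegral_indicator_const (measurableSet_preCoverEvent G c u' W) _

/-- Once the chain sits at `u`, the fitnesses on `A_u` are fresh, so its next move is dominated
by a step of the random walk; a fitness differing from its initial value certifies that its vertex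
was resampled. -/
theorem lawAt_succ_coverEvent_le (η : V × (V → ℝ)) (m : ℕ) (u : V) (W : Finset V)
    {E : Set (V → ℝ)} (hE : MeasurableSet E) (hdep : DependsOn (· ∈ E) (nbhd G u : Set V)) :
    lawAt G η (m + 1) (coverEvent G η.2 u W E) ≤
      ENNReal.ofReal (coverProb G (nextVertex G η) m u W) * Measure.pi (fun _ : V => expM) E := by
  induction m generalizing u W E with
  | zero =>
    rw [lawAt_succ_coverEvent G η 0 _ W hE hdep, mul_comm, lawAt, Measure.dirac_apply]
    by_cases hη : η ∈ preCoverEvent G η.2 u W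
    · have hW : W ⊆ nbhd G u := fun w hw => by_contra fun hwu =>
        hη.2 w (Finset.mem_sdiff.2 ⟨hw, hwu⟩) rfl
      rw [Set.indicator_of_mem hη, hη.1, coverProb_zero_self G hW, ENNReal.ofReal_one,
        Pi.one_apply]
    · rw [Set.indicator_of_notMem hη, zero_mul]
      exact zero_le
  | succ n ih =>
    calc lawAt G η (n + 1 + 1) (coverEvent G η.2 u W E)
        = Measure.pi (fun _ : V => expM) E * lawAt G η (n + 1) (preCoverEvent G η.2 u W) :=
          lawAt_succ_coverEvent G η (n + 1) _ W hE hdep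
      _ ≤ Measure.pi (fun _ : V => expM) E * ∑ v, lawAt G η (n + 1)
            (coverEvent G η.2 v (W \ nbhd G u) {g | nextVertex G (v, g) = u}) := by
          gcongr
          exact (measure_mono (preCoverEvent_subset G _ u W)).trans
            (measure_iUnion_fintype_le _ _)
      _ ≤ Measure.pi (fun _ : V => expM) E * ∑ v,
            ENNReal.ofReal (coverProb G (nextVertex G η) n v (W \ nbhd G u)) *
              ENNReal.ofReal (trP G v u) := by
          gcongr with v
          refine (ih v _ ?_ fun g g' h => ?_).trans (by gcongr; exact pi_nextVertex_eq_le G v u)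
          · exact measurable_argminOn (nbhd G v) ⟨v, mem_nbhd_self G v⟩
              (measurableSet_singleton u)
          · simp only [Set.mem_ofPred_eq, nextVertex_congr G h]
      _ = ENNReal.ofReal (coverProb G (nextVertex G η) (n + 1) u W) *
            Measure.pi (fun _ : V => expM) E := by
          rw [coverProb_succ, ENNReal.ofReal_sum_of_nonneg fun v _ =>
            mul_nonneg (coverProb_nonneg G _ _ _ _) (trP_nonneg G v u), mul_comm]
          simp_rw [ENNReal.ofReal_mul (coverProb_nonneg G _ _ _ _)]

theorem lawAt_forall_ne_le_coverF (η : V × (V → ℝ)) (t : ℕ) :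
    lawAt G η t {s | ∀ w, s.2 w ≠ η.2 w} ≤ ENNReal.ofReal (coverF G (nextVertex G η) t) := by
  cases t with
  | zero =>
    rw [lawAt, Measure.dirac_apply, Set.indicator_of_notMem fun h : ∀ w, η.2 w ≠ η.2 w => h η.1 rfl]
    exact zero_le
  | succ m =>
    have hsplit : {s : V × (V → ℝ) | ∀ w, s.2 w ≠ η.2 w} ⊆
        ⋃ u, coverEvent G η.2 u Finset.univ Set.univ := fun s hs =>
      Set.mem_iUnion.2 ⟨s.1, rfl, fun w _ => hs w, trivial⟩
    calc lawAt G η (m + 1) {s | ∀ w, s.2 w ≠ η.2 w}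
        ≤ ∑ u, lawAt G η (m + 1) (coverEvent G η.2 u Finset.univ Set.univ) :=
          (measure_mono hsplit).trans (measure_iUnion_fintype_le _ _)
      _ ≤ ∑ u, ENNReal.ofReal (coverProb G (nextVertex G η) m u Finset.univ) := by
          gcongr with u
          simpa using lawAt_succ_coverEvent_le G η m u Finset.univ MeasurableSet.univ
            fun _ _ _ => rfl
      _ = ENNReal.ofReal (coverF G (nextVertex G η) m) := by
          rw [← ENNReal.ofReal_sum_of_nonneg fun u _ => coverProb_nonneg G _ _ _ _,
            sum_coverProb_univ]
      _ ≤ ENNReal.ofReal (coverF G (nextVertex G η) (m + 1)) := by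
          gcongr; exact coverF_le_succ G _ m

end Coupling

section TotalVariation

variable {α : Type*} [MeasurableSpace α] (μ ν : Measure α) [IsProbabilityMeasure μ]
  [IsProbabilityMeasure ν]

lemma abs_sub_measure_le_one (A : Set α) : |(μ A).toReal - (ν A).toReal| ≤ 1 :=
  abs_sub_le_of_nonneg_of_le ENNReal.toReal_nonneg measureReal_le_one ENNReal.toReal_nonneg
    measureReal_le_one

lemma tvDist_le_one : tvDist μ ν ≤ 1 :=
  Real.iSup_le (fun A => abs_sub_measure_le_one μ ν A.1) zero_le_one

lemma sub_measure_le_tvDist {A : Set α} (hA : MeasurableSet A) :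
    (μ A).toReal - (ν A).toReal ≤ tvDist μ ν :=
  (le_abs_self _).trans <| le_ciSup (f := fun A : {A : Set α // MeasurableSet A} =>
    |(μ A.1).toReal - (ν A.1).toReal|)
    ⟨1, Set.forall_mem_range.2 fun A => abs_sub_measure_le_one μ ν A.1⟩ ⟨A, hA⟩

end TotalVariation

lemma tvDist_le_dbar {V : Type*} [Fintype V] [DecidableEq V] [MeasurableSpace V]
    [MeasurableSingletonClass V] (G : SimpleGraph V) [DecidableRel G.Adj] {η η' : V × (V → ℝ)}
    (hη : η ∈ goodStates) (hη' : η' ∈ goodStates) (t : ℕ) :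
    tvDist (lawAt G η t) (lawAt G η' t) ≤ dbar G t := by
  have hbdd : ∀ η : V × (V → ℝ), BddAbove (Set.range fun η' : goodStates (V := V) =>
      tvDist (lawAt G η t) (lawAt G η'.1 t)) := fun η =>
    ⟨1, Set.forall_mem_range.2 fun _ => tvDist_le_one _ _⟩
  refine (le_ciSup (hbdd η) ⟨η', hη'⟩).trans (le_ciSup (f := fun η : goodStates (V := V) =>
    ⨆ η' : goodStates (V := V), tvDist (lawAt G η.1 t) (lawAt G η'.1 t))
    ⟨1, Set.forall_mem_range.2 fun η => Real.iSup_le (fun _ => tvDist_le_one _ _) zero_le_one⟩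
    ⟨η, hη⟩)

lemma exists_goodStates_pair {V : Type*} [Fintype V] [DecidableEq V] (G : SimpleGraph V)
    [DecidableRel G.Adj] (v : V) :
    ∃ Γ : V → ℝ, (v, Γ) ∈ goodStates ∧ (v, Γ + 1) ∈ goodStates ∧ nextVertex G (v, Γ) = v := by
  set e := Fintype.equivFin V
  set γ : V → ℕ := fun w => if w = v then 0 else e w + 1
  have hγ : Function.Injective γ := by
    intro a b h
    by_cases ha : a = v <;> by_cases hb : b = v <;> simp_all [γ, Fin.val_inj]
  refine ⟨fun w => γ w, ⟨Nat.cast_injective.comp hγ, fun w => Nat.cast_nonneg _⟩,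
    ⟨(add_left_injective 1).comp (Nat.cast_injective.comp hγ),
      fun w => add_nonneg (Nat.cast_nonneg _) zero_le_one⟩, ?_⟩
  refine argminOn_eq_of_lt _ (mem_nbhd_self G v) fun c _ hc => ?_
  simp only [γ, if_pos rfl, if_neg hc]
  exact_mod_cast Nat.succ_pos _

theorem localBS_dbar_lower_bound_general {V : Type*} [Fintype V] [DecidableEq V]
    [Nonempty V] [MeasurableSpace V] [MeasurableSingletonClass V]
    (G : SimpleGraph V) [DecidableRel G.Adj] :
    ∀ t : ℕ, 1 - Finset.univ.sup' Finset.univ_nonempty (fun v => coverF G v t)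
      ≤ dbar G t := by
  intro t
  obtain ⟨v, -, hv⟩ := Finset.exists_mem_eq_sup' Finset.univ_nonempty fun v => coverF G v t
  obtain ⟨Γ, hgood, hgood', hnext⟩ := exists_goodStates_pair G v
  set A : Set (V × (V → ℝ)) := {s | ∀ w, s.2 w ≠ Γ w}
  have hA : MeasurableSet A := measurableSet_setOfPred.2 (by fun_prop)
  have hfar : lawAt G (v, Γ + 1) t A = 1 :=
    lawAt_forall_ne_eq_one G (v, Γ + 1) (fun w => by simp) t
  have hnear : (lawAt G (v, Γ) t A).toReal ≤ coverF G v t :=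
    ENNReal.toReal_le_of_le_ofReal (coverF_nonneg G v t)
      (by simpa only [hnext] using lawAt_forall_ne_le_coverF G (v, Γ) t)
  calc 1 - Finset.univ.sup' Finset.univ_nonempty (fun v => coverF G v t)
      ≤ (lawAt G (v, Γ + 1) t A).toReal - (lawAt G (v, Γ) t A).toReal := by
        rw [hv, hfar, ENNReal.toReal_one]; linarith
    _ ≤ dbar G t := (sub_measure_le_tvDist _ _ hA).trans (tvDist_le_dbar G hgood' hgood t)

/-- `d̄_t ≥ P(σ^min > t)`, where `σ^min` has distribution function
`F^min = max_v F_v` and `F_v` is the distribution function of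
`σ̃_v = inf{t ≥ 0 : ∪_{s ≤ t} A_{X_s} = V}` for the random walk started at `v`; hence
`P(σ^min > t) = 1 - max_v F_v(t)`. -/
theorem localBS_dbar_lower_bound {V : Type*} [Fintype V] [DecidableEq V]
    [Nonempty V] [MeasurableSpace V] [MeasurableSingletonClass V]
    (G : SimpleGraph V) [DecidableRel G.Adj] (hconn : G.Connected) :
    ∀ t : ℕ, 1 - Finset.univ.sup' Finset.univ_nonempty (fun v => coverF G v t)
      ≤ dbar G t :=
  localBS_dbar_lower_bound_general G
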